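/- arXiv:math/0401266 — 2 statements merged into one kernel-verified Lean document; each statement's English description precedes it below -/
import Mathlib

section
/- In the free group F(a,b), the subgroups H = ⟨a, bab⁻¹, b²⟩ and K = ⟨b, aba⁻¹, a²⟩ (an instance with m = n = 3) satisfy rank(H ∩ K) − 1 = (3−1)(3−1) = 4, i.e., rank(H ∩ K) = 5. -/
namespace Stmt11Aux

abbrev QQ := ZMod 2 × ZMod 2
abbrev MM := QQ → QQ

def shiftq (q : QQ) (m : MM) : MM := fun x => m (x + q)
@[simp] lemma shiftq_zero (m : MM) : shiftq 0 m = m := by funext x; simp [shiftq]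
@[simp] lemma shiftq_zerom (q : QQ) : shiftq q 0 = 0 := rfl
lemma shiftq_add (q q' : QQ) (m : MM) : shiftq q (shiftq q' m) = shiftq (q + q') m := by
  funext x; simp [shiftq, add_assoc]
lemma shiftq_addm (q : QQ) (m m' : MM) : shiftq q (m + m') = shiftq q m + shiftq q m' := by
  funext x; simp [shiftq]

structure GG where
  q : QQ
  m : MM

lemma qq_self (q : QQ) : q + q = 0 := by
  have : ∀ t : ZMod 2, t + t = 0 := by decide
  cases q; simp [Prod.ext_iff, this]
@[simp] lemma mm_self (m : MM) : m + m = 0 := by funext x; simp [qq_self]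

instance : Mul GG := ⟨fun g h => ⟨g.q + h.q, g.m + shiftq g.q h.m⟩⟩
instance : One GG := ⟨⟨0, 0⟩⟩
instance : Inv GG := ⟨fun g => ⟨g.q, shiftq g.q g.m⟩⟩
@[simp] lemma GG.mul_def (g h : GG) : (g * h) = ⟨g.q + h.q, g.m + shiftq g.q h.m⟩ := rfl
@[simp] lemma GG.one_def : (1 : GG) = ⟨0, 0⟩ := rfl
@[simp] lemma GG.inv_def (g : GG) : g⁻¹ = ⟨g.q, shiftq g.q g.m⟩ := rfl

instance : Group GG where
  mul_assoc g h k := by simp [add_assoc, shiftq_addm, shiftq_add]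
  one_mul g := by simp
  mul_one g := by simp
  inv_mul_cancel g := by simp [qq_self, shiftq_add, ← shiftq_addm]

def Amat : GG := ⟨(1,0), fun x => if x = 0 then (1,0) else 0⟩
def Bmat : GG := ⟨(0,1), fun x => if x = 0 then (0,1) else 0⟩
def psi : FreeGroup Bool →* GG := FreeGroup.lift (fun t => if t then Amat else Bmat)
@[simp] lemma psi_a : psi (FreeGroup.of true) = Amat := by simp [psi]
@[simp] lemma psi_b : psi (FreeGroup.of false) = Bmat := by simp [psi]

@[simp] lemma psi_a' : psi (pure true) = Amat := psi_a
@[simp] lemma psi_b' : psi (pure false) = Bmat := psi_b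

def ga : FreeGroup Bool := FreeGroup.of true
def gb : FreeGroup Bool := FreeGroup.of false

def SF : Finset (FreeGroup Bool) :=
  {ga*ga, gb*gb, gb*ga*gb⁻¹*ga⁻¹, ga*gb*ga*gb⁻¹, ga*gb*gb*ga⁻¹}

def rep (q : QQ) : FreeGroup Bool := (if q.1 = 1 then ga else 1) * (if q.2 = 1 then gb else 1)

lemma mem_aux {x : FreeGroup Bool} (h : x = 1 ∨ x ∈ SF ∨ x⁻¹ ∈ SF) :
    x ∈ Subgroup.closure (↑SF : Set (FreeGroup Bool)) := by
  rcases h with h | h | h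
  · rw [h]; exact one_mem _
  · exact Subgroup.subset_closure (Finset.mem_coe.mpr h)
  · have := inv_mem (Subgroup.subset_closure (Finset.mem_coe.mpr h))
    rwa [inv_inv] at this

lemma zmod2_cases : ∀ t : ZMod 2, t = 0 ∨ t = 1 := by decide

theorem key (g : FreeGroup Bool) :
    ∀ q : QQ, rep q * g * (rep (q + (psi g).q))⁻¹ ∈ Subgroup.closure (↑SF : Set (FreeGroup Bool)) := by
  refine FreeGroup.induction_on
    (C := fun g => ∀ q : QQ, rep q * g * (rep (q + (psi g).q))⁻¹ ∈ Subgroup.closure (↑SF : Set (FreeGroup Bool)))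
    g ?_ ?_ ?_ ?_
  · intro q
    have h1 : rep q * 1 * (rep (q + (psi 1).q))⁻¹ = 1 := by
      rw [map_one]; show rep q * 1 * (rep (q + 0))⁻¹ = 1; rw [add_zero]; group
    rw [h1]; exact one_mem _
  · rintro x ⟨q1, q2⟩
    rcases zmod2_cases q1 with rfl | rfl <;> rcases zmod2_cases q2 with rfl | rfl <;>
      cases x <;> simp only [psi_a', psi_b', psi_a, psi_b] <;> (apply mem_aux; decide)
  · rintro x - ⟨q1, q2⟩
    rcases zmod2_cases q1 with rfl | rfl <;> rcases zmod2_cases q2 with rfl | rfl <;>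
      cases x <;> simp only [map_inv, psi_a', psi_b', GG.inv_def] <;> (apply mem_aux; decide)
  · intro x y hx hy q
    have e : rep q * (x * y) * (rep (q + (psi (x*y)).q))⁻¹ =
        (rep q * x * (rep (q + (psi x).q))⁻¹) *
          (rep (q + (psi x).q) * y * (rep ((q + (psi x).q) + (psi y).q))⁻¹) := by
      rw [map_mul]
      show _ * _ * (rep (q + ((psi x).q + (psi y).q)))⁻¹ = _
      rw [← add_assoc]
      group
    rw [e]
    exact mul_mem (hx q) (hy (q + (psi x).q))

lemma snd_eq_zero_of_mem_H {x : FreeGroup Bool}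
    (hx : x ∈ Subgroup.closure {ga, gb*ga*gb⁻¹, gb^2}) : ((psi x).q).2 = 0 := by
  refine Subgroup.closure_induction ?_ ?_ ?_ ?_ hx
  · intro y hy
    simp only [Set.mem_insert_iff, Set.mem_singleton_iff] at hy
    rcases hy with rfl | rfl | rfl
    · simp only [ga, psi_a]; decide
    · simp only [ga, gb, map_mul, map_inv, psi_a, psi_b]; decide
    · rw [pow_two]; simp only [gb, map_mul, psi_b]; decide
  · simp
  · intro u v _ _ hu hv
    simp only [map_mul, GG.mul_def, Prod.snd_add, hu, hv, add_zero]
  · intro u _ hu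
    simpa only [map_inv, GG.inv_def] using hu

lemma fst_eq_zero_of_mem_K {x : FreeGroup Bool}
    (hx : x ∈ Subgroup.closure {gb, ga*gb*ga⁻¹, ga^2}) : ((psi x).q).1 = 0 := by
  refine Subgroup.closure_induction ?_ ?_ ?_ ?_ hx
  · intro y hy
    simp only [Set.mem_insert_iff, Set.mem_singleton_iff] at hy
    rcases hy with rfl | rfl | rfl
    · simp only [gb, psi_b]; decide
    · simp only [ga, gb, map_mul, map_inv, psi_a, psi_b]; decide
    · rw [pow_two]; simp only [ga, map_mul, psi_a]; decide
  · simp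
  · intro u v _ _ hu hv
    simp only [map_mul, GG.mul_def, Prod.fst_add, hu, hv, add_zero]
  · intro u _ hu
    simpa only [map_inv, GG.inv_def] using hu

def pick : Fin 5 → QQ × Bool := ![((1,0),true), ((0,1),false), ((0,1),true), ((1,1),true), ((1,1),false)]

def θfun (m : MM) : Fin 5 → ZMod 2 :=
  fun i => if (pick i).2 then (m (pick i).1).1 else (m (pick i).1).2

lemma θfun_add (m m' : MM) : θfun (m + m') = θfun m + θfun m' := by
  funext i
  simp only [θfun, Pi.add_apply, Prod.fst_add, Prod.snd_add]
  split <;> rfl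

lemma θfun_zero : θfun 0 = 0 := by
  funext i; simp only [θfun]; split <;> rfl

lemma vcomp1 : θfun (psi (ga*ga)).m = fun j => if (0:Fin 5) = j then 1 else 0 := by
  simp only [ga, gb, map_mul, map_inv, psi_a, psi_b]
  funext j; fin_cases j <;> decide

lemma vcomp2 : θfun (psi (gb*gb)).m = fun j => if (1:Fin 5) = j then 1 else 0 := by
  simp only [ga, gb, map_mul, map_inv, psi_a, psi_b]
  funext j; fin_cases j <;> decide

lemma vcomp3 : θfun (psi (gb*ga*gb⁻¹*ga⁻¹)).m = fun j => if (2:Fin 5) = j then 1 else 0 := by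
  simp only [ga, gb, map_mul, map_inv, psi_a, psi_b]
  funext j; fin_cases j <;> decide

lemma vcomp4 : θfun (psi (ga*gb*ga*gb⁻¹)).m = fun j => if (3:Fin 5) = j then 1 else 0 := by
  simp only [ga, gb, map_mul, map_inv, psi_a, psi_b]
  funext j; fin_cases j <;> decide

lemma vcomp5 : θfun (psi (ga*gb*gb*ga⁻¹)).m = fun j => if (4:Fin 5) = j then 1 else 0 := by
  simp only [ga, gb, map_mul, map_inv, psi_a, psi_b]
  funext j; fin_cases j <;> decide

def gens : Fin 5 → FreeGroup Bool := ![ga*ga, gb*gb, gb*ga*gb⁻¹*ga⁻¹, ga*gb*ga*gb⁻¹, ga*gb*gb*ga⁻¹]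

lemma gens_mem_SF : ∀ i, gens i ∈ SF := by
  intro i; fin_cases i <;> decide

lemma vcomp (i : Fin 5) : θfun (psi (gens i)).m = fun j => if i = j then (1:ZMod 2) else 0 := by
  fin_cases i
  · exact vcomp1
  · exact vcomp2
  · exact vcomp3
  · exact vcomp4
  · exact vcomp5

def LL : Subgroup (FreeGroup Bool) := Subgroup.closure (↑SF : Set (FreeGroup Bool))

lemma q_eq_zero_of_mem_LL : ∀ x ∈ LL, (psi x).q = 0 := by
  intro x hx
  refine Subgroup.closure_induction ?_ ?_ ?_ ?_ hx
  · intro y hy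
    have hy' : y = ga*ga ∨ y = gb*gb ∨ y = gb*ga*gb⁻¹*ga⁻¹ ∨ y = ga*gb*ga*gb⁻¹ ∨
        y = ga*gb*gb*ga⁻¹ := by
      simpa [SF, Finset.mem_insert, Finset.mem_singleton] using hy
    rcases hy' with rfl | rfl | rfl | rfl | rfl <;>
      (simp only [ga, gb, map_mul, map_inv, psi_a, psi_b]; decide)
  · simp
  · intro u v _ _ hu hv
    simp only [map_mul, GG.mul_def, hu, hv, add_zero]
  · intro u _ hu
    simpa only [map_inv, GG.inv_def] using hu

lemma card_ge (S : Finset ↥LL) (hStop : Subgroup.closure (↑S : Set ↥LL) = ⊤) :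
    5 ≤ S.card := by
  classical
  have hq0 : ∀ x : ↥LL, (psi (x : FreeGroup Bool)).q = 0 :=
    fun x => q_eq_zero_of_mem_LL _ x.2
  have hmul : ∀ x y : ↥LL,
      θfun (psi ((x*y : ↥LL) : FreeGroup Bool)).m
        = θfun (psi (x : FreeGroup Bool)).m + θfun (psi (y : FreeGroup Bool)).m := by
    intro x y
    have h1 : ((x*y : ↥LL) : FreeGroup Bool) = (x : FreeGroup Bool) * y := rfl
    rw [h1, map_mul]
    show θfun ((psi _).m + shiftq (psi ((x : ↥LL) : FreeGroup Bool)).q (psi _).m) = _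
    rw [hq0 x, shiftq_zero, θfun_add]
  have hone : θfun (psi ((1 : ↥LL) : FreeGroup Bool)).m = 0 := by
    have h1 : ((1 : ↥LL) : FreeGroup Bool) = 1 := rfl
    rw [h1, map_one]
    exact θfun_zero
  have hinv : ∀ x : ↥LL,
      θfun (psi ((x⁻¹ : ↥LL) : FreeGroup Bool)).m = θfun (psi (x : FreeGroup Bool)).m := by
    intro x
    have h1 : ((x⁻¹ : ↥LL) : FreeGroup Bool) = (x : FreeGroup Bool)⁻¹ := rfl
    rw [h1, map_inv]
    show θfun (shiftq (psi ((x : ↥LL) : FreeGroup Bool)).q (psi _).m) = _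
    rw [hq0 x, shiftq_zero]
  set V := Submodule.span (ZMod 2)
      ((fun z : ↥LL => θfun (psi (z : FreeGroup Bool)).m) '' ↑S) with hVdef
  have hspan : ∀ x : ↥LL, θfun (psi (x : FreeGroup Bool)).m ∈ V := by
    intro x
    have hx : x ∈ Subgroup.closure (↑S : Set ↥LL) := by rw [hStop]; trivial
    refine Subgroup.closure_induction ?_ ?_ ?_ ?_ hx
    · exact fun y hy => Submodule.subset_span ⟨y, hy, rfl⟩
    · rw [hone]; exact zero_mem _
    · intro u v _ _ hu hv; rw [hmul]; exact add_mem hu hv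
    · intro u _ hu; rw [hinv]; exact hu
  have hTop : V = ⊤ := by
    rw [eq_top_iff]
    intro w _
    rw [pi_eq_sum_univ w]
    refine Submodule.sum_mem _ fun i _ => Submodule.smul_mem _ _ ?_
    rw [← vcomp i]
    exact hspan ⟨gens i, Subgroup.subset_closure (gens_mem_SF i)⟩
  have hTcard : (5:ℕ) ≤ (S.image (fun z : ↥LL => θfun (psi (z : FreeGroup Bool)).m)).card := by
    have h1 := finrank_span_finset_le_card (R := ZMod 2)
      (S.image (fun z : ↥LL => θfun (psi (z : FreeGroup Bool)).m))
    rw [Set.finrank, Finset.coe_image, ← hVdef, hTop, finrank_top, Module.finrank_pi,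
      Fintype.card_fin] at h1
    exact h1
  exact le_trans hTcard Finset.card_image_le

lemma closure_top_LL :
    ∃ S' : Finset ↥LL, Subgroup.closure (↑S' : Set ↥LL) = ⊤ ∧ S'.card ≤ 5 := by
  classical
  refine ⟨SF.attach.map
    ⟨fun x => (⟨x.1, Subgroup.subset_closure x.2⟩ : ↥LL),
     fun u v h => Subtype.ext (Subtype.mk_eq_mk.mp h)⟩, ?_, ?_⟩
  · have hpre : (Subtype.val ⁻¹' (↑SF : Set (FreeGroup Bool)) : Set ↥LL) = ↑(SF.attach.map
        ⟨fun x => (⟨x.1, Subgroup.subset_closure x.2⟩ : ↥LL),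
         fun u v h => Subtype.ext (Subtype.mk_eq_mk.mp h)⟩) := by
      ext x
      simp only [Set.mem_preimage, Finset.coe_map, Function.Embedding.coeFn_mk, Set.mem_image,
        Finset.mem_coe, Finset.mem_attach, true_and, Subtype.exists, Finset.mem_coe]
      constructor
      · intro hx; exact ⟨x.1, hx, Subtype.ext rfl⟩
      · rintro ⟨y, hy, rfl⟩; exact hy
    rw [← hpre]
    exact Subgroup.closure_closure_coe_preimage
  · rw [Finset.card_map, Finset.card_attach]
    decide

end Stmt11Aux

open Stmt11Aux in
theorem stmt_11 :
    let a : FreeGroup Bool := FreeGroup.of true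
    let b : FreeGroup Bool := FreeGroup.of false
    let H : Subgroup (FreeGroup Bool) := Subgroup.closure {a, b * a * b⁻¹, b ^ 2}
    let K : Subgroup (FreeGroup Bool) := Subgroup.closure {b, a * b * a⁻¹, a ^ 2}
    ∃ hI : Group.FG ↥(H ⊓ K), @Group.rank ↥(H ⊓ K) _ hI = 5 := by
  intro a b H K
  have hA : ga ∈ H := Subgroup.subset_closure (Set.mem_insert _ _)
  have hBAB : gb*ga*gb⁻¹ ∈ H :=
    Subgroup.subset_closure (Set.mem_insert_of_mem _ (Set.mem_insert _ _))
  have hB2 : gb*gb ∈ H := by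
    have h2 : gb^2 ∈ H :=
      Subgroup.subset_closure (Set.mem_insert_of_mem _ (Set.mem_insert_of_mem _ rfl))
    rwa [pow_two] at h2
  have hKb : gb ∈ K := Subgroup.subset_closure (Set.mem_insert _ _)
  have hKaba : ga*gb*ga⁻¹ ∈ K :=
    Subgroup.subset_closure (Set.mem_insert_of_mem _ (Set.mem_insert _ _))
  have hKa2 : ga*ga ∈ K := by
    have h2 : ga^2 ∈ K :=
      Subgroup.subset_closure (Set.mem_insert_of_mem _ (Set.mem_insert_of_mem _ rfl))
    rwa [pow_two] at h2
  have hAinv : ga⁻¹ ∈ H := inv_mem hA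
  have hKbinv : gb⁻¹ ∈ K := inv_mem hKb
  have hKabainv : (ga*gb*ga⁻¹)⁻¹ ∈ K := inv_mem hKaba
  have hHK_le : H ⊓ K ≤ LL := by
    intro x hx
    have h0 : (psi x).q = 0 :=
      Prod.ext (fst_eq_zero_of_mem_K hx.2) (snd_eq_zero_of_mem_H hx.1)
    have hk := key x 0
    rw [h0, add_zero] at hk
    have hrep : rep 0 = 1 := by decide
    rwa [hrep, one_mul, inv_one, mul_one] at hk
  have hL_le : LL ≤ H ⊓ K := by
    rw [LL, Subgroup.closure_le]
    intro x hx
    have hx' : x = ga*ga ∨ x = gb*gb ∨ x = gb*ga*gb⁻¹*ga⁻¹ ∨ x = ga*gb*ga*gb⁻¹ ∨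
        x = ga*gb*gb*ga⁻¹ := by
      simpa [SF, Finset.mem_insert, Finset.mem_singleton] using hx
    rcases hx' with rfl | rfl | rfl | rfl | rfl
    · exact Subgroup.mem_inf.mpr ⟨mul_mem hA hA, hKa2⟩
    · exact Subgroup.mem_inf.mpr ⟨hB2, mul_mem hKb hKb⟩
    · refine Subgroup.mem_inf.mpr ⟨mul_mem hBAB hAinv, ?_⟩
      rw [show gb*ga*gb⁻¹*ga⁻¹ = gb * (ga*gb*ga⁻¹)⁻¹ by group]
      exact mul_mem hKb hKabainv
    · refine Subgroup.mem_inf.mpr ⟨?_, ?_⟩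
      · rw [show ga*gb*ga*gb⁻¹ = ga * (gb*ga*gb⁻¹) by group]
        exact mul_mem hA hBAB
      · rw [show ga*gb*ga*gb⁻¹ = (ga*gb*ga⁻¹) * (ga*ga) * gb⁻¹ by group]
        exact mul_mem (mul_mem hKaba hKa2) hKbinv
    · refine Subgroup.mem_inf.mpr ⟨?_, ?_⟩
      · rw [show ga*gb*gb*ga⁻¹ = ga * (gb*gb) * ga⁻¹ by group]
        exact mul_mem (mul_mem hA hB2) hAinv
      · rw [show ga*gb*gb*ga⁻¹ = (ga*gb*ga⁻¹) * (ga*gb*ga⁻¹) by group]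
        exact mul_mem hKaba hKaba
  have hEq : H ⊓ K = LL := le_antisymm hHK_le hL_le
  rw [hEq]
  have hFG : Group.FG ↥LL := (Group.fg_iff_subgroup_fg _).mpr ⟨SF, rfl⟩
  refine ⟨hFG, le_antisymm ?_ ?_⟩
  · obtain ⟨S', hS', hcard⟩ := closure_top_LL
    exact le_trans (Group.rank_le hS') hcard
  · obtain ⟨S, hScard, hStop⟩ := Group.rank_spec ↥LL
    rw [← hScard]
    exact card_ge S hStop
end

section
/- In the free group F(a,b), the subgroups H = ⟨a, bab⁻¹, b² a b⁻²⟩ and K = ⟨b, aba⁻¹⟩ (case m = 3, n = 2, k = 1, ℓ = 0... with the theorem's formula) satisfy rank(H ∩ K) = k(n−1) + ℓ = 1. -/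
/-!
A subgroup of a free group given by a folded labelled graph (its Stallings graph) consists of the
elements whose reduced word labels a closed path at the base vertex, and the intersection of two
such subgroups is read by the product graph. Here the product graph is connected with 8 vertices
and 8 positive edges, so its fundamental group has rank 8 - 8 + 1 = 1. Concretely, if `ρ p` is
the label of the spanning-tree path to `p`, every edge `p --x--> q` has
`ρ p * x * (ρ q)⁻¹ ∈ {1, ⁅a, b⁆, ⁅a, b⁆⁻¹}`, hence `H ⊓ K = ⟨⁅a, b⁆⟩`.
-/

namespace FreeGroup

variable {α S T : Type*}

/-- The partial transition function `δ` is a labelled graph on `S`: the letter `(x, true)` is the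
generator `x` and `(x, false)` its inverse. `readWord δ l s` is the end of the path labelled `l`
starting at `s`, if there is one. -/
def readWord (δ : α × Bool → S → Option S) : List (α × Bool) → S → Option S
  | [], s => some s
  | x :: l, s => (δ x s).bind (readWord δ l)

def IsInverseClosed (δ : α × Bool → S → Option S) : Prop :=
  ∀ x b s t, δ (x, b) s = some t → δ (x, !b) t = some s

variable {δ : α × Bool → S → Option S}

@[simp]
lemma readWord_nil (s : S) : readWord δ [] s = some s := rfl

@[simp]
lemma readWord_cons (x : α × Bool) (l : List (α × Bool)) (s : S) :
    readWord δ (x :: l) s = (δ x s).bind (readWord δ l) := rfl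

lemma readWord_append (l₁ l₂ : List (α × Bool)) (s : S) :
    readWord δ (l₁ ++ l₂) s = (readWord δ l₁ s).bind (readWord δ l₂) := by
  induction l₁ generalizing s with
  | nil => rfl
  | cons x l ih => simp only [List.cons_append, readWord_cons, ih, Option.bind_assoc]

lemma readWord_of_red_step (hδ : IsInverseClosed δ) {l₁ l₂ : List (α × Bool)} (h : Red.Step l₁ l₂)
    {s t : S} (hl : readWord δ l₁ s = some t) : readWord δ l₂ s = some t := by
  cases h with
  | @not p q x b =>
    rw [readWord_append] at hl ⊢
    cases hp : readWord δ p s with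
    | none => simp [hp] at hl
    | some u =>
      cases hx : δ (x, b) u with
      | none => simp [hp, hx] at hl
      | some v => simpa [hp, hx, hδ x b u v hx] using hl

lemma readWord_of_red (hδ : IsInverseClosed δ) {l₁ l₂ : List (α × Bool)} (h : Red l₁ l₂) {s t : S}
    (hl : readWord δ l₁ s = some t) : readWord δ l₂ s = some t := by
  induction h with
  | refl => exact hl
  | tail _ hstep ih => exact readWord_of_red_step hδ hstep ih

lemma readWord_invRev (hδ : IsInverseClosed δ) {l : List (α × Bool)} {s t : S}
    (hl : readWord δ l s = some t) : readWord δ (invRev l) t = some s := by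
  induction l generalizing s with
  | nil => simpa [eq_comm] using hl
  | cons x l ih =>
    obtain ⟨x, b⟩ := x
    cases hx : δ (x, b) s with
    | none => simp [hx] at hl
    | some u =>
      simp only [readWord_cons, hx, Option.bind_some] at hl
      rw [invRev_cons, readWord_append, ih hl]
      simp [invRev, hδ x b s u hx]

def prodGraph (δ : α × Bool → S → Option S) (δ' : α × Bool → T → Option T) :
    α × Bool → S × T → Option (S × T) :=
  fun x p => (δ x p.1).bind fun s => (δ' x p.2).map (s, ·)

variable {δ' : α × Bool → T → Option T}

lemma prodGraph_eq_some {x : α × Bool} {p q : S × T} :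
    prodGraph δ δ' x p = some q ↔ δ x p.1 = some q.1 ∧ δ' x p.2 = some q.2 := by
  cases h : δ x p.1 <;> cases h' : δ' x p.2 <;> simp [prodGraph, h, h', Prod.ext_iff]

lemma IsInverseClosed.prodGraph (hδ : IsInverseClosed δ) (hδ' : IsInverseClosed δ') :
    IsInverseClosed (prodGraph δ δ') := fun x b _ _ h =>
  prodGraph_eq_some.mpr
    ⟨hδ x b _ _ (prodGraph_eq_some.mp h).1, hδ' x b _ _ (prodGraph_eq_some.mp h).2⟩

lemma readWord_prodGraph_eq_some {l : List (α × Bool)} {p q : S × T} :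
    readWord (prodGraph δ δ') l p = some q ↔
      readWord δ l p.1 = some q.1 ∧ readWord δ' l p.2 = some q.2 := by
  induction l generalizing p with
  | nil => simp only [readWord_nil, Option.some_inj, Prod.ext_iff]
  | cons x l ih =>
    cases h : δ x p.1 <;> cases h' : δ' x p.2 <;> simp [prodGraph, h, h', ih]

lemma mul_mk_mul_inv_mem_of_readWord {N : Subgroup (FreeGroup α)} {ρ : S → FreeGroup α}
    (hρ : ∀ x s t, δ x s = some t → ρ s * mk [x] * (ρ t)⁻¹ ∈ N) {l : List (α × Bool)} {s t : S}
    (hl : readWord δ l s = some t) : ρ s * mk l * (ρ t)⁻¹ ∈ N := by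
  induction l generalizing s with
  | nil =>
    obtain rfl : s = t := by simpa using hl
    rw [← one_eq_mk, mul_one, mul_inv_cancel]
    exact N.one_mem
  | cons x l ih =>
    cases hx : δ x s with
    | none => simp [hx] at hl
    | some u =>
      simp only [readWord_cons, hx, Option.bind_some] at hl
      have hmk : mk (x :: l) = mk [x] * mk l := by rw [mul_mk]; rfl
      rw [hmk]
      convert N.mul_mem (hρ x s u hx) (ih hl) using 1
      group

variable [DecidableEq α]

def loopSubgroup (hδ : IsInverseClosed δ) (s₀ : S) : Subgroup (FreeGroup α) where
  carrier := {g | readWord δ g.toWord s₀ = some s₀}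
  one_mem' := rfl
  mul_mem' {g h} hg hh := by
    rw [Set.mem_ofPred, toWord_mul]
    refine readWord_of_red hδ reduce.red ?_
    rw [readWord_append, Set.mem_ofPred.mp hg]
    exact hh
  inv_mem' {g} hg := by
    rw [Set.mem_ofPred, toWord_inv]
    exact readWord_invRev hδ hg

lemma mem_loopSubgroup (hδ : IsInverseClosed δ) (s₀ : S) (g : FreeGroup α) :
    g ∈ loopSubgroup hδ s₀ ↔ readWord δ g.toWord s₀ = some s₀ := Iff.rfl

lemma loopSubgroup_prodGraph (hδ : IsInverseClosed δ) (hδ' : IsInverseClosed δ') (s₀ : S) (t₀ : T) :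
    loopSubgroup (hδ.prodGraph hδ') (s₀, t₀) = loopSubgroup hδ s₀ ⊓ loopSubgroup hδ' t₀ := by
  ext g
  exact readWord_prodGraph_eq_some

lemma loopSubgroup_le (hδ : IsInverseClosed δ) {s₀ : S} {N : Subgroup (FreeGroup α)}
    (ρ : S → FreeGroup α) (hρ₀ : ρ s₀ = 1)
    (hρ : ∀ x s t, δ x s = some t → ρ s * mk [x] * (ρ t)⁻¹ ∈ N) : loopSubgroup hδ s₀ ≤ N := by
  intro g hg
  simpa [hρ₀, mk_toWord] using mul_mk_mul_inv_mem_of_readWord hρ hg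

end FreeGroup

lemma Subgroup.rank_closure_singleton {G : Type*} [Group G] {g : G} (hg : g ≠ 1) :
    Group.rank (Subgroup.closure {g}) = 1 := by
  have : Nontrivial (Subgroup.closure {g}) :=
    ⟨⟨⟨g, subset_closure rfl⟩, 1, fun h => hg (congrArg Subtype.val h)⟩⟩
  refine le_antisymm ?_ (Group.rank_pos _)
  simpa using rank_closure_finite_le_nat_card ({g} : Set G)

namespace StallingsExample

open FreeGroup
open scoped commutatorElement

/-- The Stallings graph of `⟨a, b a b⁻¹, b² a² b⁻²⟩` with `a = (true, _)`, `b = (false, _)`: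
`a`-loops at `0` and `1`, `b`-edges `0 → 1 → 2`, and `a`-edges `2 ⇄ 3`. -/
def graphH : Bool × Bool → Fin 4 → Option (Fin 4)
  | (true, _), 0 => some 0
  | (true, _), 1 => some 1
  | (true, _), 2 => some 3
  | (true, _), 3 => some 2
  | (false, true), 0 => some 1
  | (false, true), 1 => some 2
  | (false, false), 1 => some 0
  | (false, false), 2 => some 1
  | _, _ => none

/-- The Stallings graph of `⟨b, a b a⁻¹⟩`: `b`-loops at `0` and `1`, and an `a`-edge `0 → 1`. -/
def graphK : Bool × Bool → Fin 2 → Option (Fin 2)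
  | (false, _), s => some s
  | (true, true), 0 => some 1
  | (true, false), 1 => some 0
  | _, _ => none

lemma isInverseClosed_graphH : IsInverseClosed graphH := by
  unfold IsInverseClosed; decide

lemma isInverseClosed_graphK : IsInverseClosed graphK := by
  unfold IsInverseClosed; decide

lemma closure_le_loopSubgroup_graphH :
    Subgroup.closure {of true, of false * of true * (of false)⁻¹,
      of false ^ 2 * of true ^ 2 * (of false ^ 2)⁻¹} ≤ loopSubgroup isInverseClosed_graphH 0 := by
  rw [Subgroup.closure_le]
  rintro g (rfl | rfl | rfl) <;> simp only [SetLike.mem_coe, mem_loopSubgroup] <;> decide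

lemma closure_le_loopSubgroup_graphK :
    Subgroup.closure {of false, of true * of false * (of true)⁻¹} ≤
      loopSubgroup isInverseClosed_graphK 0 := by
  rw [Subgroup.closure_le]
  rintro g (rfl | rfl) <;> simp only [SetLike.mem_coe, mem_loopSubgroup] <;> decide

def spanningTreeLabel : Fin 4 × Fin 2 → FreeGroup Bool
  | (0, 0) => 1
  | (0, 1) => of true
  | (1, 0) => of false
  | (1, 1) => of true * of false
  | (2, 0) => of false ^ 2
  | (2, 1) => of true * of false ^ 2
  | (3, 0) => of true * of false ^ 2 * (of true)⁻¹
  | (3, 1) => of false ^ 2 * of true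

lemma spanningTreeLabel_edge : ∀ x p q, prodGraph graphH graphK x p = some q →
    spanningTreeLabel p * mk [x] * (spanningTreeLabel q)⁻¹ ∈
      [1, ⁅of true, of false⁆, ⁅of true, of false⁆⁻¹] := by
  decide

lemma loopSubgroup_prodGraph_le :
    loopSubgroup (isInverseClosed_graphH.prodGraph isInverseClosed_graphK) (0, 0) ≤
      Subgroup.closure {⁅of true, of false⁆} := by
  refine loopSubgroup_le _ spanningTreeLabel rfl fun x p q h => ?_
  have hc := Subgroup.mem_closure_singleton_self ⁅of true, of false⁆
  have hedge := spanningTreeLabel_edge x p q h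
  simp only [List.mem_cons, List.not_mem_nil, or_false] at hedge
  rcases hedge with hedge | hedge | hedge <;> rw [hedge]
  exacts [one_mem _, hc, inv_mem hc]

lemma inf_eq_closure_commutator :
    Subgroup.closure {of true, of false * of true * (of false)⁻¹,
        of false ^ 2 * of true ^ 2 * (of false ^ 2)⁻¹} ⊓
      Subgroup.closure {of false, of true * of false * (of true)⁻¹} =
      Subgroup.closure {⁅of true, of false⁆} := by
  refine le_antisymm ?_ ?_
  · calc _ ≤ loopSubgroup isInverseClosed_graphH 0 ⊓ loopSubgroup isInverseClosed_graphK 0 :=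
          inf_le_inf closure_le_loopSubgroup_graphH closure_le_loopSubgroup_graphK
      _ = loopSubgroup (isInverseClosed_graphH.prodGraph isInverseClosed_graphK) (0, 0) :=
          (loopSubgroup_prodGraph ..).symm
      _ ≤ _ := loopSubgroup_prodGraph_le
  · rw [Subgroup.closure_le, Set.singleton_subset_iff, SetLike.mem_coe, Subgroup.mem_inf]
    constructor
    · rw [show ⁅of true, of false⁆ = of true * (of false * of true * (of false)⁻¹)⁻¹ by
        rw [commutatorElement_def]; group]
      exact mul_mem (Subgroup.subset_closure (by simp))
        (inv_mem (Subgroup.subset_closure (by simp)))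
    · exact mul_mem (Subgroup.subset_closure (by simp))
        (inv_mem (Subgroup.subset_closure (by simp)))

end StallingsExample

theorem stmt_17 :
    let a : FreeGroup Bool := FreeGroup.of true
    let b : FreeGroup Bool := FreeGroup.of false
    let H : Subgroup (FreeGroup Bool) :=
      Subgroup.closure {a, b * a * b⁻¹, b ^ 2 * a ^ 2 * (b ^ 2)⁻¹}
    let K : Subgroup (FreeGroup Bool) := Subgroup.closure {b, a * b * a⁻¹}
    ∃ hI : Group.FG ↥(H ⊓ K), @Group.rank ↥(H ⊓ K) _ hI = 1 := by
  intro a b H K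
  rw [show H ⊓ K = _ from StallingsExample.inf_eq_closure_commutator]
  exact ⟨inferInstance, Subgroup.rank_closure_singleton (by decide)⟩
end
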